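/- The map θ, which contracts every non-branching edge of a binary tree, is a bijection between binary trees with n internal nodes and plane trees with n edges. -/
import Mathlib


/-- Plane binary trees (internal nodes have an ordered pair of children). -/
inductive BTree : Type
  | leaf : BTree
  | node : BTree → BTree → BTree
deriving DecidableEq

/-- Number of internal nodes. -/
def BTree.nodes : BTree → ℕ
  | .leaf => 0
  | .node l r => l.nodes + r.nodes + 1

/-- Number of leaves. -/
def BTree.leaves : BTree → ℕ
  | .leaf => 1
  | .node l r => l.leaves + r.leaves

/-- Plane trees: a root vertex with an ordered list of subtrees. -/
inductive PTree : Type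
  | node : List PTree → PTree

mutual
/-- Number of edges of a plane tree. -/
def PTree.edges : PTree → ℕ
  | .node cs => PTree.edgesList cs

def PTree.edgesList : List PTree → ℕ
  | [] => 0
  | t :: ts => 1 + PTree.edges t + PTree.edgesList ts
end

mutual
/-- `θ` contracts all non-branching edges.  An edge is branching when the child's
direction (left/right) differs from its parent's own direction (the root counts as
left).  `spineL` processes a subtree in left position: the edge to its left child is
non-branching (contracted into the same vertex of `θ(B)`), and the edge to its right
child is branching, producing a new child vertex. -/
def spineL : BTree → List PTree
  | .leaf => []
  | .node l r => PTree.node (spineR r) :: spineL l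

/-- `spineR` processes a subtree in right position: the edge to its right child is
non-branching, the edge to its left child is branching. -/
def spineR : BTree → List PTree
  | .leaf => []
  | .node l r => PTree.node (spineL l) :: spineR r
end

/-- The plane tree `θ(B)` obtained by contracting every non-branching edge of `B`. -/
def theta (B : BTree) : PTree := PTree.node (spineL B)

mutual
def unL : List PTree → BTree
  | [] => .leaf
  | .node cs :: ts => .node (unL ts) (unR cs)
def unR : List PTree → BTree
  | [] => .leaf
  | .node cs :: ts => .node (unL cs) (unR ts)
end

mutual
theorem unL_spineL : ∀ B, unL (spineL B) = B
  | .leaf => by simp [spineL, unL]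
  | .node l r => by simp [spineL, unL, unL_spineL l, unR_spineR r]
theorem unR_spineR : ∀ B, unR (spineR B) = B
  | .leaf => by simp [spineR, unR]
  | .node l r => by simp [spineR, unR, unL_spineL l, unR_spineR r]
end

mutual
theorem spineL_unL : ∀ ts, spineL (unL ts) = ts
  | [] => by simp [unL, spineL]
  | .node cs :: ts => by simp [unL, spineL, spineL_unL ts, spineR_unR cs]
theorem spineR_unR : ∀ ts, spineR (unR ts) = ts
  | [] => by simp [unR, spineR]
  | .node cs :: ts => by simp [unR, spineR, spineL_unL cs, spineR_unR ts]
end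

mutual
theorem edges_spineL : ∀ B, PTree.edgesList (spineL B) = B.nodes
  | .leaf => rfl
  | .node l r => by
      simp [spineL, PTree.edgesList, PTree.edges, edges_spineL l, edges_spineR r,
        BTree.nodes]; omega
theorem edges_spineR : ∀ B, PTree.edgesList (spineR B) = B.nodes
  | .leaf => rfl
  | .node l r => by
      simp [spineR, PTree.edgesList, PTree.edges, edges_spineL l, edges_spineR r,
        BTree.nodes]; omega
end

/-- `θ` is a bijection between binary trees with `n` internal nodes and plane trees
with `n` edges. -/
theorem theta_bijective (n : ℕ) :
    ∃ f : {B : BTree // B.nodes = n} → {T : PTree // T.edges = n},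
      (∀ B, (f B).val = theta B.val) ∧ Function.Bijective f := by
  refine ⟨fun B => ⟨theta B.val, ?_⟩, fun B => rfl, ?_, ?_⟩
  · simp [theta, PTree.edges, edges_spineL, B.2]
  · rintro ⟨B, hB⟩ ⟨B', hB'⟩ h
    simp only [Subtype.mk.injEq, theta, PTree.node.injEq] at h ⊢
    rw [← unL_spineL B, ← unL_spineL B', h]
  · rintro ⟨⟨cs⟩, hT⟩
    refine ⟨⟨unL cs, ?_⟩, ?_⟩
    · rw [← edges_spineL, spineL_unL]; exact hT
    · simp [theta, spineL_unL]
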